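/- arXiv:1411.0954 — 5 statements merged into one kernel-verified Lean document; each statement's English description precedes it below -/
import Mathlib

section
/- Let u_1,...,u_{n-1} be elements of F* (F a totally real number field of degree n with real embeddings J_1,...,J_n, and J = (J_1,...,J_n): F → ℝ^n). Then the vector e_n = (0,...,0,1) ∈ ℝ^n does not lie in the ℝ-linear span of J(u_1),...,J(u_{n-1}). -/
/-- For a totally real field `F` of degree `n` with real embeddings `J₁,…,Jₙ` and any
`u₁,…,u_{n-1} ∈ F*`, the vector `eₙ = (0,…,0,1)` does not lie in the real span of the
vectors `J(u₁),…,J(u_{n-1})`. -/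
theorem stmt4 (F : Type*) [Field F] [NumberField F] (n : ℕ)
    (hn : n = Module.finrank ℚ F)
    (J : Fin n → (F →+* ℝ)) (hJ : Function.Injective J)
    (u : Fin (n - 1) → Fˣ) :
    (fun j : Fin n => if (j : ℕ) = n - 1 then (1 : ℝ) else 0) ∉
      Submodule.span ℝ (Set.range fun i : Fin (n - 1) => fun j : Fin n => J j (u i : F)) := by
  intro hmem
  have hnpos : 0 < n := hn ▸ Module.finrank_pos
  -- The embeddings into ℂ obtained from J exhaust all embeddings
  set g : Fin n → (F →+* ℂ) := fun j => Complex.ofRealHom.comp (J j) with hg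
  have hginj : Function.Injective g := by
    intro a b hab
    apply hJ
    ext x
    have := RingHom.congr_fun hab x
    simpa [hg, Complex.ofReal_inj] using this
  have hgbij : Function.Bijective g :=
    (Fintype.bijective_iff_injective_and_card g).mpr
      ⟨hginj, by rw [Fintype.card_fin, NumberField.Embeddings.card F ℂ, hn]⟩
  -- trace as sum over the J's
  have htr : ∀ y : F, ((Algebra.trace ℚ F y : ℚ) : ℝ) = ∑ j, J j y := by
    intro y
    have h1 : ((Algebra.trace ℚ F y : ℚ) : ℂ) = ∑ σ : F →ₐ[ℚ] ℂ, σ y := by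
      simpa using trace_eq_sum_embeddings (K := ℚ) (L := F) ℂ (x := y)
    set e : Fin n → (F →ₐ[ℚ] ℂ) := fun j => RingHom.equivRatAlgHom F ℂ (g j) with he
    have hebij : Function.Bijective e :=
      (RingHom.equivRatAlgHom (R := F) (S := ℂ)).bijective.comp hgbij
    have h4 : ((Algebra.trace ℚ F y : ℚ) : ℂ) = ((∑ j, J j y : ℝ) : ℂ) := by
      rw [h1, ← Fintype.sum_bijective e hebij (fun j => g j y) (fun σ => σ y) (fun j => rfl)]
      push_cast [hg]; rfl
    exact_mod_cast h4
  -- find nonzero x with trace (x * u i) = 0 for all i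
  set Φ : F →ₗ[ℚ] (Fin (n - 1) → ℚ) :=
    LinearMap.pi (fun i => (Algebra.trace ℚ F).comp (LinearMap.mulRight ℚ (u i : F))) with hΦ
  have hker : LinearMap.ker Φ ≠ ⊥ := by
    intro h
    have hinj : Function.Injective Φ := LinearMap.ker_eq_bot.mp h
    have := LinearMap.finrank_le_finrank_of_injective hinj
    rw [Module.finrank_pi, Fintype.card_fin] at this
    omega
  obtain ⟨x, hx, hx0⟩ := (Submodule.ne_bot_iff _).mp hker
  have hxtr : ∀ i, Algebra.trace ℚ F (x * (u i : F)) = 0 := by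
    intro i
    have := LinearMap.mem_ker.mp hx
    exact congrFun this i
  -- orthogonality in ℝ
  have horth : ∀ i, ∑ j, J j x * J j (u i : F) = 0 := by
    intro i
    have := htr (x * (u i : F))
    rw [hxtr i] at this
    simpa [map_mul] using this.symm
  -- expand membership
  obtain ⟨c, hc⟩ := (Submodule.mem_span_range_iff_exists_fun ℝ).mp hmem
  -- compute the pairing ∑ j, J j x * e_n j
  set jn : Fin n := ⟨n - 1, by omega⟩ with hjn
  have key : ∑ j, J j x * (if (j : ℕ) = n - 1 then (1 : ℝ) else 0) = J jn x := by
    have : ∀ j : Fin n, ((j : ℕ) = n - 1) ↔ (j = jn) := by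
      intro j; rw [Fin.ext_iff]
    simp only [this]
    simp
  have hv : ∀ j, (∑ i, c i * J j (u i : F)) = (if (j : ℕ) = n - 1 then (1 : ℝ) else 0) := by
    intro j
    have := congrFun hc j
    simpa using this
  have key2 : ∑ j, J j x * (if (j : ℕ) = n - 1 then (1 : ℝ) else 0) = 0 := by
    calc ∑ j, J j x * (if (j : ℕ) = n - 1 then (1 : ℝ) else 0)
        = ∑ j, J j x * ∑ i, c i * J j (u i : F) := by
          refine Finset.sum_congr rfl fun j _ => ?_; rw [hv j]
      _ = ∑ i, c i * ∑ j, J j x * J j (u i : F) := by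
          simp_rw [Finset.mul_sum]
          rw [Finset.sum_comm]
          exact Finset.sum_congr rfl fun i _ => Finset.sum_congr rfl fun j _ => by ring
      _ = 0 := by simp [horth]
  rw [key] at key2
  exact (J jn).injective.ne hx0 (by simpa using key2)
end

section
/- Let C be a rational open cone with integral generators σ_1,...,σ_r ∈ ℤ^n, v ∈ ℚ^n, and 𝒫 the half-open parallelepiped of the σ_i. Then the generating series g(C,v)(x) = Σ_{m ∈ (C−v) ∩ ℤ^n} x^m satisfies the rational function identity g(C,v)(x) = (Σ_{a ∈ (𝒫−v) ∩ ℤ^n} x^a) / ((1 − x^{σ_1}) ⋯ (1 − x^{σ_r})). -/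
open Classical in
/-- The coefficientwise form of the rational-function identity
`g(C,v)(x) = (Σ_{a ∈ (𝒫−v)∩ℤⁿ} x^a) / ∏ (1 − x^{σ_i})`: for each exponent `m ∈ ℤⁿ`,
the number of representations `m = a + Σ kᵢσᵢ` with `v + a ∈ 𝒫` and `kᵢ ∈ ℤ_{≥0}`
equals `1` if `v + m ∈ C` and `0` otherwise. -/
theorem stmt6 (n r : ℕ) (σ : Fin r → Fin n → ℤ)
    (hσ : LinearIndependent ℝ (fun i => fun j => (σ i j : ℝ)))
    (v : Fin n → ℚ) (m : Fin n → ℤ) :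
    Set.ncard {p : (Fin n → ℤ) × (Fin r → ℕ) |
        (∃ c : Fin r → ℝ, (∀ i, 0 < c i ∧ c i ≤ 1) ∧
          (fun j => (v j : ℝ) + (p.1 j : ℝ)) = ∑ i, c i • (fun j => (σ i j : ℝ))) ∧
        (∀ j, m j = p.1 j + ∑ i, (p.2 i : ℤ) * σ i j)}
    = if (∃ c : Fin r → ℝ, (∀ i, 0 < c i) ∧
        (fun j => (v j : ℝ) + (m j : ℝ)) = ∑ i, c i • (fun j => (σ i j : ℝ))) then 1 else 0 := by
  set σR : Fin r → Fin n → ℝ := fun i j => (σ i j : ℝ) with hσR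
  have huniq : ∀ (c e : Fin r → ℝ), ∑ i, c i • σR i = ∑ i, e i • σR i → c = e := by
    intro c e h
    have h0 : ∑ i, (c - e) i • σR i = 0 := by
      simp [sub_smul, Finset.sum_sub_distrib, h]
    have := Fintype.linearIndependent_iff.mp hσ (c - e) h0
    funext i
    have := this i
    simpa [sub_eq_zero] using this
  -- key computation: if (a, k) is in the set with parameter c, then v + m = Σ (c i + k i) σ i
  have hkey : ∀ (a : Fin n → ℤ) (k : Fin r → ℕ) (c : Fin r → ℝ),
      ((fun j => (v j : ℝ) + (a j : ℝ)) = ∑ i, c i • σR i) →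
      (∀ j, m j = a j + ∑ i, (k i : ℤ) * σ i j) →
      (fun j => (v j : ℝ) + (m j : ℝ)) = ∑ i, (c i + (k i : ℝ)) • σR i := by
    intro a k c hcsum hm
    funext j
    have h1 : (v j : ℝ) + (a j : ℝ) = ∑ i, c i * σ i j := by
      have := congrFun hcsum j
      simpa [Finset.sum_apply, smul_eq_mul] using this
    have h2 : ((m j : ℤ) : ℝ) = (a j : ℝ) + ∑ i, (k i : ℝ) * σ i j := by
      rw [hm j]; push_cast; ring_nf
    simp only [Finset.sum_apply, Pi.smul_apply, smul_eq_mul]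
    rw [h2, show (v j : ℝ) + ((a j : ℝ) + ∑ i, (k i : ℝ) * σ i j)
        = ((v j : ℝ) + (a j : ℝ)) + ∑ i, (k i : ℝ) * σ i j by ring, h1,
      ← Finset.sum_add_distrib]
    exact Finset.sum_congr rfl fun i _ => by simp only [hσR]; ring
  by_cases hC : (∃ c : Fin r → ℝ, (∀ i, 0 < c i) ∧
      (fun j => (v j : ℝ) + (m j : ℝ)) = ∑ i, c i • (fun j => (σ i j : ℝ)))
  · rw [if_pos hC]
    obtain ⟨d, hd, hdsum⟩ := hC
    set k0 : Fin r → ℕ := fun i => (⌈d i⌉ - 1).toNat with hk0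
    have hk0z : ∀ i, (k0 i : ℤ) = ⌈d i⌉ - 1 := by
      intro i
      have : (1 : ℤ) ≤ ⌈d i⌉ := Int.ceil_pos.mpr (hd i)
      simp only [hk0]
      omega
    set a0 : Fin n → ℤ := fun j => m j - ∑ i, (k0 i : ℤ) * σ i j with ha0
    have hset : {p : (Fin n → ℤ) × (Fin r → ℕ) |
        (∃ c : Fin r → ℝ, (∀ i, 0 < c i ∧ c i ≤ 1) ∧
          (fun j => (v j : ℝ) + (p.1 j : ℝ)) = ∑ i, c i • (fun j => (σ i j : ℝ))) ∧
        (∀ j, m j = p.1 j + ∑ i, (p.2 i : ℤ) * σ i j)} = {(a0, k0)} := by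
      ext ⟨a, k⟩
      simp only [Set.mem_setOf_eq, Set.mem_singleton_iff, Prod.mk.injEq]
      constructor
      · rintro ⟨⟨c, hc, hcsum⟩, hm⟩
        have hcd : (fun i => c i + (k i : ℝ)) = d := by
          apply huniq
          rw [← hkey a k c hcsum hm, hdsum]
        have hkk : k = k0 := by
          funext i
          have hdi : d i = c i + k i := by rw [← hcd]
          have h1 : (k i : ℝ) < d i := by rw [hdi]; linarith [(hc i).1]
          have h2 : d i ≤ (k i : ℝ) + 1 := by rw [hdi]; linarith [(hc i).2]
          have hceil : ⌈d i⌉ = (k i : ℤ) + 1 := by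
            rw [Int.ceil_eq_iff]
            constructor
            · push_cast; simpa using h1
            · push_cast; simpa using h2
          have := hk0z i
          omega
        refine ⟨?_, hkk⟩
        funext j
        have := hm j
        rw [hkk] at this
        simp only [ha0]
        omega
      · rintro ⟨rfl, rfl⟩
        constructor
        · refine ⟨fun i => d i - (k0 i : ℝ), fun i => ?_, ?_⟩
          · show 0 < d i - (k0 i : ℝ) ∧ d i - (k0 i : ℝ) ≤ 1
            have hz := hk0z i
            have hc1 : ((k0 i : ℕ) : ℝ) = (⌈d i⌉ : ℝ) - 1 := by exact_mod_cast hz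
            have hceil1 : (⌈d i⌉ : ℝ) < d i + 1 := Int.ceil_lt_add_one (d i)
            have hceil2 : d i ≤ (⌈d i⌉ : ℝ) := Int.le_ceil (d i)
            constructor <;> rw [hc1] <;> linarith
          · funext j
            have hdj : (v j : ℝ) + (m j : ℝ) = ∑ i, d i * σ i j := by
              have := congrFun hdsum j
              simpa [Finset.sum_apply, smul_eq_mul] using this
            simp only [Finset.sum_apply, Pi.smul_apply, smul_eq_mul, ha0]
            push_cast
            rw [show (v j : ℝ) + ((m j : ℝ) - ∑ i, (k0 i : ℝ) * σ i j)
                = ((v j : ℝ) + (m j : ℝ)) - ∑ i, (k0 i : ℝ) * σ i j by ring, hdj,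
              ← Finset.sum_sub_distrib]
            exact Finset.sum_congr rfl fun i _ => by ring
        · intro j
          simp [ha0]
    rw [hset, Set.ncard_singleton]
  · rw [if_neg hC]
    have hempty : {p : (Fin n → ℤ) × (Fin r → ℕ) |
        (∃ c : Fin r → ℝ, (∀ i, 0 < c i ∧ c i ≤ 1) ∧
          (fun j => (v j : ℝ) + (p.1 j : ℝ)) = ∑ i, c i • (fun j => (σ i j : ℝ))) ∧
        (∀ j, m j = p.1 j + ∑ i, (p.2 i : ℤ) * σ i j)} = ∅ := by
      rw [Set.eq_empty_iff_forall_notMem]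
      rintro ⟨a, k⟩ ⟨⟨c, hc, hcsum⟩, hm⟩
      exact hC ⟨fun i => c i + (k i : ℝ),
        fun i => by show (0:ℝ) < c i + (k i : ℝ); have := (hc i).1; have h0 : (0:ℝ) ≤ (k i : ℝ) := Nat.cast_nonneg _; linarith
        , hkey a k c hcsum hm⟩
    rw [hempty, Set.ncard_empty]
end

section
/- Let K be a field, g ∈ K[[z_1,...,z_n]], and p ∈ K[z_1,...,z_n] homogeneous of degree d with nonzero coefficient of z_j^d. Set Z_j = (z_j z_1,..., z_j z_{j-1}, z_j, z_j z_{j+1},..., z_j z_n). Then the substitution (g/p)(Z_j) lies in z_j^{−d} K[[z_1,...,z_n]]. -/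
/-- Substitution `g ↦ g(Z_j)` where `Z_j = (z_j z_1, …, z_j z_{j-1}, z_j, z_j z_{j+1}, …, z_j z_n)`:
the monomial `z^e` is sent to `z_j^{|e|} ∏_{i≠j} z_i^{e_i}`. -/
noncomputable def substZ {K : Type*} [CommRing K] {n : ℕ} (j : Fin n)
    (g : MvPowerSeries (Fin n) K) : MvPowerSeries (Fin n) K :=
  fun f => if (∑ i ∈ Finset.univ.erase j, f i) ≤ f j
    then MvPowerSeries.coeff (R := K) (Finsupp.update f j (f j - ∑ i ∈ Finset.univ.erase j, f i)) g
    else 0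

lemma sum_update_eq {n : ℕ} (j : Fin n) (f : Fin n →₀ ℕ) (m : ℕ) :
    (∑ i, (Finsupp.update f j m) i) = m + ∑ i ∈ Finset.univ.erase j, f i := by
  rw [← Finset.add_sum_erase _ _ (Finset.mem_univ j)]
  congr 1
  · rw [Finsupp.coe_update, Function.update_self]
  · apply Finset.sum_congr rfl
    intro i hi
    simp only [Finset.mem_erase] at hi
    rw [Finsupp.coe_update]
    exact Function.update_of_ne hi.1 _ _

/-- If `g ∈ K[[z]]` and `p` is homogeneous of degree `d` with nonzero coefficient of `z_j^d`,
then `(g/p)(Z_j) ∈ z_j^{−d} K[[z]]`; equivalently, there is `h ∈ K[[z]]` with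
`h · p(Z_j) = z_j^d · g(Z_j)`. -/
theorem stmt8 (K : Type*) [Field K] (n d : ℕ) (j : Fin n)
    (g p : MvPowerSeries (Fin n) K)
    (hphom : ∀ e : Fin n →₀ ℕ, (∑ i, e i) ≠ d → MvPowerSeries.coeff (R := K) e p = 0)
    (hpj : MvPowerSeries.coeff (R := K) (Finsupp.single j d) p ≠ 0) :
    ∃ h : MvPowerSeries (Fin n) K,
      h * substZ j p = (MvPowerSeries.X j) ^ d * substZ j g := by
  classical
  -- key vanishing: coefficients of substZ j p vanish unless f j = d
  have hvan : ∀ f : Fin n →₀ ℕ, f j ≠ d → substZ j p f = 0 := by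
    intro f hf
    unfold substZ
    split_ifs with hle
    · apply hphom
      rw [sum_update_eq]
      rwa [Nat.sub_add_cancel hle]
    · rfl
  -- the unit: substZ j p = X j ^ d * u
  set u : MvPowerSeries (Fin n) K := fun f => substZ j p (f + Finsupp.single j d) with hu
  have hfac : substZ j p = (MvPowerSeries.X j : MvPowerSeries (Fin n) K) ^ d * u := by
    ext f
    rw [MvPowerSeries.X_pow_eq, MvPowerSeries.coeff_monomial_mul]
    split_ifs with hle
    · rw [one_mul, MvPowerSeries.coeff_apply]
      show substZ j p f = substZ j p (f - Finsupp.single j d + Finsupp.single j d)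
      rw [tsub_add_cancel_of_le hle]
    · rw [MvPowerSeries.coeff_apply]
      apply hvan
      intro h
      exact hle (Finsupp.single_le_iff.mpr (le_of_eq h.symm))
  have hconst : MvPowerSeries.constantCoeff (σ := Fin n) (R := K) u = MvPowerSeries.coeff (R := K) (Finsupp.single j d) p := by
    have : MvPowerSeries.constantCoeff (σ := Fin n) (R := K) u = u 0 := rfl
    rw [this, hu]
    simp only [zero_add]
    unfold substZ
    have hS : (∑ i ∈ Finset.univ.erase j, (Finsupp.single j d : Fin n →₀ ℕ) i) = 0 := by
      apply Finset.sum_eq_zero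
      intro i hi
      simp only [Finset.mem_erase] at hi
      simp [Finsupp.single_apply, hi.1.symm]
    rw [hS]
    simp only [Finsupp.single_eq_same, Nat.zero_le, if_pos, Nat.sub_zero]
    rw [show Finsupp.update (Finsupp.single j d) j d
        = Finsupp.single j d by
      ext i
      rcases eq_or_ne i j with h | h
      · subst h; simp [Finsupp.coe_update]
      · simp [Finsupp.coe_update, Function.update_apply, h]]
  have hunit : IsUnit u := by
    rw [MvPowerSeries.isUnit_iff_constantCoeff, hconst]
    exact hpj.isUnit
  obtain ⟨v, hv⟩ := hunit
  refine ⟨substZ j g * (v⁻¹ : (MvPowerSeries (Fin n) K)ˣ), ?_⟩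
  rw [hfac, ← hv]
  calc substZ j g * ↑v⁻¹ * ((MvPowerSeries.X j) ^ d * ↑v)
      = (MvPowerSeries.X j) ^ d * substZ j g * ((↑v⁻¹ : MvPowerSeries (Fin n) K) * ↑v) := by
        ring
    _ = (MvPowerSeries.X j) ^ d * substZ j g := by
        rw [← Units.val_mul, inv_mul_cancel, Units.val_one, mul_one]
end

section
/- For nonnegative integer tuples r = (r_1,...,r_n) and s = (s_1,...,s_n) with Σr_i = Σs_i = m and an n×n matrix M over a field K of characteristic 0, define C_{r,s}(M) = s! times the coefficient of z^s in the polynomial (zM)_1^{r_1}⋯(zM)_n^{r_n}, where s! = s_1!⋯s_n!. Then C_{r,s}(M) = C_{s,r}(M^t). -/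
open Finset MvPolynomial

section Aux
variable {K : Type*} [CommSemiring K] {n : ℕ}

lemma aux_prod_X_pow (d : Fin n → ℕ) :
    (∏ i, (X i : MvPolynomial (Fin n) K) ^ d i) =
      monomial (Finsupp.equivFunOnFinite.symm d) 1 := by
  have h : (Finsupp.equivFunOnFinite.symm d) = ∑ i, Finsupp.single i (d i) := by
    ext j; simp [Finsupp.finset_sum_apply, Finsupp.single_apply]
  rw [h, monomial_sum_one]
  simp only [X_pow_eq_monomial]

lemma aux_coeff (M : Matrix (Fin n) (Fin n) K) (r s : Fin n → ℕ) :
    MvPolynomial.coeff (Finsupp.equivFunOnFinite.symm s)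
        (∏ j, (∑ i, MvPolynomial.C (M i j) * MvPolynomial.X i) ^ (r j))
      = ∑ A ∈ Fintype.piFinset (fun j => piAntidiag univ (r j)),
          if (fun i => ∑ j, A j i) = s then
            (∏ j, (Nat.multinomial univ (A j) : K)) * ∏ j, ∏ i, M i j ^ A j i
          else 0 := by
  classical
  simp only [Finset.sum_pow_eq_sum_piAntidiag]
  rw [Finset.prod_univ_sum, MvPolynomial.coeff_sum]
  refine Finset.sum_congr rfl fun A hA => ?_
  have hterm : ∏ j, ((Nat.multinomial univ (A j) : MvPolynomial (Fin n) K) *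
      ∏ i, (C (M i j) * X i) ^ A j i)
      = C ((∏ j, (Nat.multinomial univ (A j) : K)) * ∏ j, ∏ i, M i j ^ A j i) *
        monomial (Finsupp.equivFunOnFinite.symm (fun i => ∑ j, A j i)) 1 := by
    have h1 : ∀ j, ((Nat.multinomial univ (A j) : MvPolynomial (Fin n) K) *
        ∏ i, (C (M i j) * X i) ^ A j i)
        = C ((Nat.multinomial univ (A j) : K) * ∏ i, M i j ^ A j i) *
          monomial (Finsupp.equivFunOnFinite.symm (A j)) 1 := by
      intro j
      rw [← aux_prod_X_pow]
      simp only [mul_pow, ← C_pow, Finset.prod_mul_distrib, ← map_prod]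
      rw [← MvPolynomial.C_eq_coe_nat, ← mul_assoc, ← C_mul]
    have h2 : ∑ j, Finsupp.equivFunOnFinite.symm (A j)
        = Finsupp.equivFunOnFinite.symm (fun i => ∑ j, A j i) := by
      ext i; simp [Finsupp.finset_sum_apply]
    simp only [h1, Finset.prod_mul_distrib, ← map_prod, ← monomial_sum_one, h2]
  rw [hterm, coeff_C_mul, coeff_monomial]
  have hiff : (Finsupp.equivFunOnFinite.symm (fun i => ∑ j, A j i)
      = Finsupp.equivFunOnFinite.symm s) ↔ ((fun i => ∑ j, A j i) = s) :=
    Finsupp.equivFunOnFinite.symm.injective.eq_iff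
  by_cases h : (fun i => ∑ j, A j i) = s
  · rw [if_pos (hiff.2 h), if_pos h, mul_one]
  · rw [if_neg (fun hc => h (hiff.1 hc)), if_neg h, mul_zero]

end Aux

/-- The reciprocity `C_{r,s}(M) = C_{s,r}(Mᵗ)`, where
`C_{r,s}(M) = s! · (coefficient of z^s in (zM)₁^{r₁} ⋯ (zM)ₙ^{rₙ})`. -/
theorem stmt12 (K : Type*) [Field K] [CharZero K] (n : ℕ)
    (M : Matrix (Fin n) (Fin n) K) (r s : Fin n → ℕ) (m : ℕ)
    (hr : ∑ i, r i = m) (hs : ∑ i, s i = m) :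
    (∏ i, (Nat.factorial (s i) : K)) *
      MvPolynomial.coeff (Finsupp.equivFunOnFinite.symm s)
        (∏ j, (∑ i, MvPolynomial.C (M i j) * MvPolynomial.X i) ^ (r j))
    = (∏ i, (Nat.factorial (r i) : K)) *
      MvPolynomial.coeff (Finsupp.equivFunOnFinite.symm r)
        (∏ j, (∑ i, MvPolynomial.C (M.transpose i j) * MvPolynomial.X i) ^ (s j)) := by
  classical
  rw [aux_coeff M r s, aux_coeff M.transpose s r, Finset.mul_sum, Finset.mul_sum]
  simp only [mul_ite, mul_zero]
  rw [← Finset.sum_filter, ← Finset.sum_filter]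
  refine Finset.sum_nbij' (fun A => fun i j => A j i) (fun B => fun i j => B j i)
    ?_ ?_ (fun A _ => rfl) (fun B _ => rfl) ?_
  · intro A hA
    simp only [Finset.mem_filter, Fintype.mem_piFinset, mem_piAntidiag, mem_univ,
      implies_true, and_true] at hA ⊢
    obtain ⟨h1, h2⟩ := hA
    refine ⟨fun i => ?_, ?_⟩
    · exact congrFun h2 i
    · funext j; exact h1 j
  · intro B hB
    simp only [Finset.mem_filter, Fintype.mem_piFinset, mem_piAntidiag, mem_univ,
      implies_true, and_true] at hB ⊢
    obtain ⟨h1, h2⟩ := hB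
    refine ⟨fun i => ?_, ?_⟩
    · exact congrFun h2 i
    · funext j; exact h1 j
  · intro A hA
    simp only [Finset.mem_filter, Fintype.mem_piFinset, mem_piAntidiag, mem_univ,
      implies_true, and_true] at hA
    obtain ⟨h1, h2⟩ := hA
    have hAr : ∀ j, ∑ i, A j i = r j := h1
    have hAs : ∀ i, ∑ j, A j i = s i := fun i => congrFun h2 i
    -- the M parts agree
    have hM : (∏ j, ∏ i, M i j ^ A j i)
        = ∏ j, ∏ i, M.transpose i j ^ A i j := by
      rw [Finset.prod_comm]
      exact Finset.prod_congr rfl fun i _ => Finset.prod_congr rfl fun j _ => rfl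
    -- factorial identity
    have hN : (0:ℕ) < ∏ j, ∏ i, (A j i).factorial :=
      Finset.prod_pos fun j _ => Finset.prod_pos fun i _ => Nat.factorial_pos _
    have hnat : ((∏ i, (s i).factorial) * ∏ j, Nat.multinomial univ (A j))
        * (∏ j, ∏ i, (A j i).factorial)
        = ((∏ i, (r i).factorial) * ∏ j, Nat.multinomial univ (fun i => A i j))
        * (∏ j, ∏ i, (A j i).factorial) := by
      have e1 : (∏ j, Nat.multinomial univ (A j)) * (∏ j, ∏ i, (A j i).factorial)
          = ∏ j, (r j).factorial := by
        rw [← Finset.prod_mul_distrib]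
        refine Finset.prod_congr rfl fun j _ => ?_
        rw [mul_comm, Nat.multinomial_spec, hAr j]
      have e2 : (∏ j, Nat.multinomial univ (fun i => A i j)) *
          (∏ j, ∏ i, (A j i).factorial) = ∏ j, (s j).factorial := by
        rw [Finset.prod_comm (f := fun j i => (A j i).factorial), ← Finset.prod_mul_distrib]
        refine Finset.prod_congr rfl fun j _ => ?_
        rw [mul_comm, Nat.multinomial_spec, hAs j]
      calc ((∏ i, (s i).factorial) * ∏ j, Nat.multinomial univ (A j))
            * (∏ j, ∏ i, (A j i).factorial)
          = (∏ i, (s i).factorial) * ((∏ j, Nat.multinomial univ (A j))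
            * (∏ j, ∏ i, (A j i).factorial)) := by ring
        _ = (∏ i, (s i).factorial) * ∏ j, (r j).factorial := by rw [e1]
        _ = (∏ i, (r i).factorial) * ∏ j, (s j).factorial := by rw [mul_comm]
        _ = (∏ i, (r i).factorial) * ((∏ j, Nat.multinomial univ (fun i => A i j))
            * (∏ j, ∏ i, (A j i).factorial)) := by rw [e2]
        _ = _ := by ring
    have hfac : ((∏ i, (s i).factorial) * ∏ j, Nat.multinomial univ (A j) : ℕ)
        = ((∏ i, (r i).factorial) * ∏ j, Nat.multinomial univ (fun i => A i j) : ℕ) :=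
      Nat.eq_of_mul_eq_mul_right hN hnat
    have hfacK : ((∏ i, ((s i).factorial : K)) * ∏ j, (Nat.multinomial univ (A j) : K))
        = ((∏ i, ((r i).factorial : K)) * ∏ j, (Nat.multinomial univ (fun i => A i j) : K)) := by
      exact_mod_cast hfac
    calc (∏ i, ((s i).factorial : K)) *
          ((∏ j, (Nat.multinomial univ (A j) : K)) * ∏ j, ∏ i, M i j ^ A j i)
        = ((∏ i, ((s i).factorial : K)) * ∏ j, (Nat.multinomial univ (A j) : K))
          * ∏ j, ∏ i, M i j ^ A j i := by ring
      _ = ((∏ i, ((r i).factorial : K)) * ∏ j, (Nat.multinomial univ (fun i => A i j) : K))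
          * ∏ j, ∏ i, M.transpose i j ^ A i j := by rw [hfacK, hM]
      _ = _ := by ring
end

section
/- Let F(z) = Σ_r F_r z^r ∈ K[[z_1,...,z_n]] with K a field of characteristic 0, let M be an n×n matrix over K, and for a nonnegative integer k define P_r^k by f_M(z)^k = Σ_r (P_r^k / r!) z^r where f_M(z) = (zM)_1⋯(zM)_n. Then (k!)^n times the coefficient of (z_1⋯z_n)^k in F(zM^t) equals Σ_r F_r P_r^k. -/
section Aux

variable {K : Type*} [Field K] [CharZero K]

private lemma stmt13_natWeight {n : ℕ} (A : Fin n → Fin n → ℕ) (r s : Fin n → ℕ)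
    (hr : ∀ i, ∑ j, A i j = r i) (hs : ∀ j, ∑ i, A i j = s j) :
    (∏ j, (s j).factorial) * ∏ i, Nat.multinomial Finset.univ (A i)
      = (∏ i, (r i).factorial) * ∏ j, Nat.multinomial Finset.univ (fun i => A i j) := by
  have hpos : 0 < ∏ i, ∏ j, (A i j).factorial :=
    Finset.prod_pos fun i _ => Finset.prod_pos fun j _ => Nat.factorial_pos _
  have h1 : ∀ i, (∏ j, (A i j).factorial) * Nat.multinomial Finset.univ (A i) = (r i).factorial :=
    fun i => by rw [Nat.multinomial_spec, hr]
  have h2 : ∀ j, (∏ i, (A i j).factorial) * Nat.multinomial Finset.univ (fun i => A i j)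
      = (s j).factorial := fun j => by rw [Nat.multinomial_spec, hs]
  apply Nat.eq_of_mul_eq_mul_left hpos
  calc (∏ i, ∏ j, (A i j).factorial) * ((∏ j, (s j).factorial) * ∏ i, Nat.multinomial Finset.univ (A i))
      = (∏ j, (s j).factorial) * ∏ i, ((∏ j, (A i j).factorial) * Nat.multinomial Finset.univ (A i)) := by
        rw [Finset.prod_mul_distrib]; ring
    _ = (∏ j, (s j).factorial) * ∏ i, (r i).factorial := by
        rw [Finset.prod_congr rfl fun i _ => h1 i]
    _ = (∏ i, (r i).factorial) * ∏ j, ((∏ i, (A i j).factorial) * Nat.multinomial Finset.univ (fun i => A i j)) := by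
        rw [Finset.prod_congr rfl fun j (_ : j ∈ Finset.univ) => h2 j]; ring
    _ = (∏ i, ∏ j, (A i j).factorial) * ((∏ i, (r i).factorial) * ∏ j, Nat.multinomial Finset.univ (fun i => A i j)) := by
        rw [Finset.prod_mul_distrib, Finset.prod_comm (f := fun i j => (A i j).factorial)]; ring

set_option linter.unusedSectionVars false in
private lemma stmt13_coeffProdPow {n : ℕ} (N : Fin n → Fin n → K) (r s : Fin n → ℕ) :
    MvPolynomial.coeff (Finsupp.equivFunOnFinite.symm s)
      (∏ i, (∑ j, MvPolynomial.C (N i j) * MvPolynomial.X j) ^ r i)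
    = ∑ A ∈ Fintype.piFinset (fun i => Finset.piAntidiag Finset.univ (r i)),
        if ∀ j, (∑ i, A i j) = s j then
          (∏ i, (Nat.multinomial Finset.univ (A i) : K)) * ∏ i, ∏ j, N i j ^ A i j
        else 0 := by
  have hmono : ∀ t : Fin n → ℕ,
      (∏ j, (MvPolynomial.X j : MvPolynomial (Fin n) K) ^ t j)
        = MvPolynomial.monomial (Finsupp.equivFunOnFinite.symm t) 1 := by
    intro t
    rw [← MvPolynomial.prod_X_pow_eq_monomial]
    refine (Finset.prod_subset (Finset.subset_univ _) fun j _ hj => ?_).symm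
    have h0 : t j = 0 := by simpa [Finsupp.mem_support_iff] using hj
    rw [h0, pow_zero]
  simp_rw [Finset.sum_pow_eq_sum_piAntidiag]
  rw [Finset.prod_univ_sum, MvPolynomial.coeff_sum]
  refine Finset.sum_congr rfl fun A hA => ?_
  have e1 : ∀ i, (∏ j, (MvPolynomial.C (N i j) * MvPolynomial.X j) ^ A i j)
      = MvPolynomial.C (∏ j, N i j ^ A i j) *
          ∏ j, (MvPolynomial.X j : MvPolynomial (Fin n) K) ^ A i j := by
    intro i
    rw [map_prod, ← Finset.prod_mul_distrib]
    simp_rw [mul_pow, MvPolynomial.C_pow]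
  have eQ : (∏ i, ∏ j, (MvPolynomial.X j : MvPolynomial (Fin n) K) ^ A i j)
      = ∏ j, (MvPolynomial.X j : MvPolynomial (Fin n) K) ^ (∑ i, A i j) := by
    rw [Finset.prod_comm]
    exact Finset.prod_congr rfl fun j _ => Finset.prod_pow_eq_pow_sum _ _ _
  have hterm : (∏ i, ((Nat.multinomial Finset.univ (A i) : MvPolynomial (Fin n) K) *
        ∏ j, (MvPolynomial.C (N i j) * MvPolynomial.X j) ^ A i j))
      = MvPolynomial.C ((∏ i, (Nat.multinomial Finset.univ (A i) : K)) * ∏ i, ∏ j, N i j ^ A i j) *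
          MvPolynomial.monomial (Finsupp.equivFunOnFinite.symm fun j => ∑ i, A i j) 1 := by
    simp_rw [e1, ← map_natCast (MvPolynomial.C : K →+* MvPolynomial (Fin n) K)]
    rw [Finset.prod_mul_distrib, Finset.prod_mul_distrib, eQ, hmono, ← map_prod, ← map_prod,
      map_mul]; ring
  rw [hterm, MvPolynomial.coeff_C_mul, MvPolynomial.coeff_monomial]
  have hiff : (Finsupp.equivFunOnFinite.symm fun j => ∑ i, A i j)
      = Finsupp.equivFunOnFinite.symm s ↔ ∀ j, (∑ i, A i j) = s j := by
    rw [Finsupp.equivFunOnFinite.symm.injective.eq_iff, _root_.funext_iff]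
  split_ifs with h1 h2 h2
  · rw [mul_one]
  · exact absurd (hiff.mp h1) h2
  · exact absurd (hiff.mpr h2) h1
  · rw [mul_zero]

private lemma stmt13_key {n : ℕ} (N : Fin n → Fin n → K) (r s : Fin n → ℕ) :
    (∏ j, ((s j).factorial : K)) * MvPolynomial.coeff (Finsupp.equivFunOnFinite.symm s)
      (∏ i, (∑ j, MvPolynomial.C (N i j) * MvPolynomial.X j) ^ r i)
    = (∏ i, ((r i).factorial : K)) * MvPolynomial.coeff (Finsupp.equivFunOnFinite.symm r)
      (∏ j, (∑ i, MvPolynomial.C (N i j) * MvPolynomial.X i) ^ s j) := by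
  rw [stmt13_coeffProdPow N r s, stmt13_coeffProdPow (fun j i => N i j) s r,
    Finset.mul_sum, Finset.mul_sum]
  simp_rw [mul_ite, mul_zero]
  rw [← Finset.sum_filter, ← Finset.sum_filter]
  refine Finset.sum_nbij' (fun A j i => A i j) (fun B i j => B j i) ?_ ?_ ?_ ?_ ?_
  · intro A hA
    simp only [Finset.mem_filter, Fintype.mem_piFinset, Finset.mem_piAntidiag] at hA ⊢
    exact ⟨fun j => ⟨hA.2 j, fun i _ => Finset.mem_univ i⟩, fun i => (hA.1 i).1⟩
  · intro B hB
    simp only [Finset.mem_filter, Fintype.mem_piFinset, Finset.mem_piAntidiag] at hB ⊢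
    exact ⟨fun i => ⟨hB.2 i, fun j _ => Finset.mem_univ j⟩, fun j => (hB.1 j).1⟩
  · intro A _; rfl
  · intro B _; rfl
  · intro A hA
    simp only [Finset.mem_filter, Fintype.mem_piFinset, Finset.mem_piAntidiag] at hA
    have hw := stmt13_natWeight A r s (fun i => (hA.1 i).1) hA.2
    have hcast : ((((∏ j, (s j).factorial) * ∏ i, Nat.multinomial Finset.univ (A i) : ℕ)) : K)
        = (((∏ i, (r i).factorial) * ∏ j, Nat.multinomial Finset.univ (fun i => A i j) : ℕ) : K) := by
      rw [hw]
    push_cast at hcast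
    rw [← mul_assoc, hcast, Finset.prod_comm (f := fun i j => N i j ^ A i j), mul_assoc]

end Aux

/-- For `F ∈ K[[z]]` and `M` an `n×n` matrix, `(k!)ⁿ` times the coefficient of
`(z₁⋯zₙ)^k` in `F(zMᵗ)` equals `Σ_r F_r P_r^k`, where `f_M(z)^k = Σ_r (P_r^k/r!) z^r`
and `f_M(z) = (zM)₁⋯(zM)ₙ`. Substitution is expanded coefficientwise:
the coefficient of `(z₁⋯zₙ)^k` in `F(zMᵗ)` is `Σ_r F_r · coeff_{(k,…,k)} ∏ᵢ ℓᵢ^{rᵢ}`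
with `ℓᵢ = (zMᵗ)ᵢ`. -/
theorem stmt13 (K : Type*) [Field K] [CharZero K] (n k : ℕ)
    (M : Matrix (Fin n) (Fin n) K) (F : MvPowerSeries (Fin n) K) :
    (Nat.factorial k : K) ^ n *
      ∑ᶠ r : Fin n →₀ ℕ, MvPowerSeries.coeff r F *
        MvPolynomial.coeff (Finsupp.equivFunOnFinite.symm fun _ => k)
          (∏ i, (∑ j, MvPolynomial.C (M i j) * MvPolynomial.X j) ^ (r i))
    = ∑ᶠ r : Fin n →₀ ℕ, MvPowerSeries.coeff r F *
        ((∏ i, (Nat.factorial (r i) : K)) *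
          MvPolynomial.coeff r ((∏ j, (∑ i, MvPolynomial.C (M i j) * MvPolynomial.X i)) ^ k)) := by
  rw [show ((Nat.factorial k : K) ^ n) *
      (∑ᶠ r : Fin n →₀ ℕ, MvPowerSeries.coeff r F *
        MvPolynomial.coeff (Finsupp.equivFunOnFinite.symm fun _ => k)
          (∏ i, (∑ j, MvPolynomial.C (M i j) * MvPolynomial.X j) ^ (r i)))
      = (Nat.factorial k : K) ^ n •
      (∑ᶠ r : Fin n →₀ ℕ, MvPowerSeries.coeff r F *
        MvPolynomial.coeff (Finsupp.equivFunOnFinite.symm fun _ => k)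
          (∏ i, (∑ j, MvPolynomial.C (M i j) * MvPolynomial.X j) ^ (r i))) from (smul_eq_mul _ _).symm,
    smul_finsum]
  refine finsum_congr fun r => ?_
  have h := stmt13_key M ⇑r (fun _ => k)
  rw [Finsupp.equivFunOnFinite_symm_coe] at h
  have hk : (∏ _j : Fin n, ((Nat.factorial k : K))) = (Nat.factorial k : K) ^ n := by
    simp
  rw [hk] at h
  rw [← Finset.prod_pow]
  rw [smul_eq_mul, ← mul_assoc, mul_comm ((Nat.factorial k : K) ^ n), mul_assoc, h]
end
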